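/- arXiv:2307.04850 — 2 statements merged into one kernel-verified Lean document; each statement's English description precedes it below -/
import Mathlib

section
/- Suppose for each i ∈ Fin d the event A_i = {|φ̂ i - φ i| ≤ ε/2} has probability at least 1 - δ/d, where φ̂ i are random estimates. Let D* be the (random) set of k indices with the largest estimates. Then with probability at least 1 - δ, every i ∈ D* satisfies φ i ≥ φ_(k) - ε, where φ_(k) is the k-th largest true value. -/
/-!
On the event that every estimate is within `ε / 2` of its true value, which by the union bound
has probability at least `1 - δ`, the claim holds pointwise: if `i ∈ D*` lies outside a set `T`
of `k` indices with true values at least `t`, some `j ∈ T` is not selected, so `φ̂ j ≤ φ̂ i` and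
`φ i ≥ φ̂ i - ε / 2 ≥ φ̂ j - ε / 2 ≥ φ j - ε ≥ t - ε`.
-/

open MeasureTheory ENNReal Finset

def SelectsLargest {ι : Type*} (f : ι → ℝ) (D : Finset ι) : Prop :=
  ∀ i ∈ D, ∀ j ∉ D, f j ≤ f i

theorem SelectsLargest.sub_le_of_abs_sub_le {ι : Type*} {f fhat : ι → ℝ} {D T : Finset ι}
    {t ε : ℝ} (hsel : SelectsLargest fhat D) (hcard : #D ≤ #T) (hT : ∀ j ∈ T, t ≤ f j)
    (hclose : ∀ j, |fhat j - f j| ≤ ε / 2) : ∀ i ∈ D, t - ε ≤ f i := by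
  intro i hi
  have hε : 0 ≤ ε := by linarith [abs_nonneg (fhat i - f i), hclose i]
  by_cases hiT : i ∈ T
  · linarith [hT i hiT]
  · have hTD : ¬ T ⊆ D := fun hTD => hiT (eq_of_subset_of_card_le hTD hcard ▸ hi)
    obtain ⟨j, hjT, hjD⟩ := not_subset.1 hTD
    linarith [hsel i hi j hjD, hT j hjT, (abs_le.1 (hclose i)).2, (abs_le.1 (hclose j)).1]

theorem natCast_mul_ofReal_div_le (n : ℕ) (δ : ℝ) :
    (n : ℝ≥0∞) * ENNReal.ofReal (δ / n) ≤ ENNReal.ofReal δ := by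
  rcases Nat.eq_zero_or_pos n with rfl | hn
  · simp
  · rw [← ofReal_natCast, ← ofReal_mul (Nat.cast_nonneg n),
      mul_div_cancel₀ δ (Nat.cast_ne_zero.2 hn.ne')]

theorem one_sub_ofReal_le_measure_iInter {Ω ι : Type*} [MeasurableSpace Ω] [Fintype ι]
    {μ : Measure Ω} [IsProbabilityMeasure μ] {A : ι → Set Ω} {δ : ℝ}
    (hA : ∀ i, μ (A i)ᶜ ≤ ENNReal.ofReal (δ / Fintype.card ι)) :
    1 - ENNReal.ofReal δ ≤ μ (⋂ i, A i) := by
  have hunion : μ (⋂ i, A i)ᶜ ≤ ENNReal.ofReal δ :=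
    calc μ (⋂ i, A i)ᶜ = μ (⋃ i, (A i)ᶜ) := by rw [Set.compl_iInter]
      _ ≤ ∑ i, μ (A i)ᶜ := measure_iUnion_fintype_le μ _
      _ ≤ ∑ _ : ι, ENNReal.ofReal (δ / Fintype.card ι) := sum_le_sum fun i _ => hA i
      _ = Fintype.card ι * ENNReal.ofReal (δ / Fintype.card ι) := by
        rw [sum_const, card_univ, nsmul_eq_mul]
      _ ≤ ENNReal.ofReal δ := natCast_mul_ofReal_div_le _ δ
  calc 1 - ENNReal.ofReal δ ≤ 1 - μ (⋂ i, A i)ᶜ := tsub_le_tsub_left hunion 1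
    _ ≤ μ (⋂ i, A i) := by
      rw [tsub_le_iff_right, ← measure_univ (μ := μ)]
      exact measure_univ_le_add_compl _

theorem stmt6_general {Ω : Type*} [MeasurableSpace Ω] (μ : Measure Ω) [IsProbabilityMeasure μ]
    (d k : ℕ) (ε δ : ℝ)
    (φ : Fin d → ℝ) (φhat : Fin d → Ω → ℝ)
    (hconf : ∀ i, μ {ω | |φhat i ω - φ i| ≤ ε / 2}ᶜ ≤ ENNReal.ofReal (δ / d))
    (Dstar : Ω → Finset (Fin d)) (hD : ∀ ω, (Dstar ω).card = k)
    (hsel : ∀ ω, ∀ i ∈ Dstar ω, ∀ j ∉ Dstar ω, φhat j ω ≤ φhat i ω)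
    (T : Finset (Fin d)) (hT : T.card = k) (t : ℝ) (hTt : ∀ j ∈ T, t ≤ φ j) :
    1 - ENNReal.ofReal δ ≤ μ {ω | ∀ i ∈ Dstar ω, t - ε ≤ φ i} := by
  calc 1 - ENNReal.ofReal δ ≤ μ (⋂ i, {ω | |φhat i ω - φ i| ≤ ε / 2}) :=
        one_sub_ofReal_le_measure_iInter fun i => by simpa using hconf i
    _ ≤ μ {ω | ∀ i ∈ Dstar ω, t - ε ≤ φ i} := measure_mono fun ω hω =>
        SelectsLargest.sub_le_of_abs_sub_le (hsel ω) (by rw [hD ω, hT]) hTt fun j => Set.mem_iInter.1 hω j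

theorem stmt6 {Ω : Type*} [MeasurableSpace Ω] (μ : Measure Ω) [IsProbabilityMeasure μ]
    (d k : ℕ) (hk : k ≤ d) (ε δ : ℝ) (hε : ε ∈ Set.Ioo (0 : ℝ) 1) (hδ : δ ∈ Set.Ioo (0 : ℝ) 1)
    (φ : Fin d → ℝ) (φhat : Fin d → Ω → ℝ)
    (hmeas : ∀ i, MeasurableSet {ω | |φhat i ω - φ i| ≤ ε / 2})
    (hconf : ∀ i, μ {ω | |φhat i ω - φ i| ≤ ε / 2}ᶜ ≤ ENNReal.ofReal (δ / d))
    (Dstar : Ω → Finset (Fin d)) (hD : ∀ ω, (Dstar ω).card = k)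
    (hsel : ∀ ω, ∀ i ∈ Dstar ω, ∀ j ∉ Dstar ω, φhat j ω ≤ φhat i ω)
    (T : Finset (Fin d)) (hT : T.card = k) (t : ℝ) (hTt : ∀ j ∈ T, t ≤ φ j) :
    1 - ENNReal.ofReal δ ≤ μ {ω | ∀ i ∈ Dstar ω, t - ε ≤ φ i} :=
  stmt6_general μ d k ε δ φ φhat hconf Dstar hD hsel T hT t hTt
end

section
/- Let φ be antitone and suppose |φ̂ i - φ i| ≤ ε/2 only for indices i in a set S ⊇ {1, ..., k} (i.e., all true top-k indices have valid intervals), and additionally for every j ∉ S we have φ̂ j ≤ φ k - ε/2. Then the set D* of the k largest estimates satisfies D* ⊆ S and is an ε-approximate top-k solution. -/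
/-!
Every estimate among the `k` true leaders is at least `φ_k - ε/2`. A set of `k` largest
estimates either consists of the true leaders or misses one of them, and in both cases each
of its estimates dominates one of the leaders' estimates, hence is at least `φ_k - ε/2`.
The out-of-`S` estimates lie strictly below that threshold, so `D* ⊆ S`, and the valid
intervals on `S` lose another `ε/2`.
-/

open Finset

theorem le_of_mem_of_selects_largest {ι α : Type*} [Preorder α] {f : ι → α} {c : α}
    {D K : Finset ι} (hsel : ∀ i ∈ D, ∀ j ∉ D, f j ≤ f i) (hK : ∀ j ∈ K, c ≤ f j)
    (hcard : #D ≤ #K) : ∀ i ∈ D, c ≤ f i := by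
  intro i hi
  by_cases hiK : i ∈ K
  · exact hK i hiK
  obtain ⟨j, hjK, hjD⟩ : ∃ j ∈ K, j ∉ D := by
    by_contra! hKD
    have : #(cons i K hiK) ≤ #D := card_le_card (cons_subset.mpr ⟨hi, hKD⟩)
    rw [card_cons] at this
    omega
  exact (hK j hjK).trans (hsel i hi j hjD)

theorem stmt11 (d k : ℕ) (hk0 : 0 < k) (hk : k ≤ d) (ε : ℝ)
    (φ φhat : Fin d → ℝ) (hsorted : Antitone φ)
    (S : Finset (Fin d)) (hS : ∀ i : Fin d, (i : ℕ) < k → i ∈ S)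
    (hCI : ∀ i ∈ S, |φhat i - φ i| ≤ ε / 2)
    (hout : ∀ j ∉ S, φhat j < φ ⟨k - 1, by omega⟩ - ε / 2)
    (Dstar : Finset (Fin d)) (hD : Dstar.card = k)
    (hsel : ∀ i ∈ Dstar, ∀ j ∉ Dstar, φhat j ≤ φhat i) :
    Dstar ⊆ S ∧ ∀ i ∈ Dstar, φ ⟨k - 1, by omega⟩ - ε ≤ φ i := by
  set kk : Fin d := ⟨k - 1, by omega⟩
  have hleaders : ∀ j ∈ Iic kk, φ kk - ε / 2 ≤ φhat j := by
    intro j hj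
    have hjk : j ≤ kk := mem_Iic.mp hj
    have hjS : j ∈ S := hS j (by rw [Fin.le_def] at hjk; simp only [kk] at hjk; omega)
    linarith [(abs_le.mp (hCI j hjS)).1, hsorted hjk]
  have hDstar : ∀ i ∈ Dstar, φ kk - ε / 2 ≤ φhat i :=
    le_of_mem_of_selects_largest hsel hleaders (by simp [hD, Fin.card_Iic, kk]; omega)
  have hsub : Dstar ⊆ S := fun i hi => by
    by_contra hiS
    linarith [hout i hiS, hDstar i hi]
  exact ⟨hsub, fun i hi => by linarith [(abs_le.mp (hCI i (hsub hi))).2, hDstar i hi]⟩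
end
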